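/- If F₋ > 2F₊ > 0, then for every w = (w₁, w₂) ∈ ℝ², the unique minimizer of v ↦ D(w, v) is v_min(w) = max{w₁, 0, -w₂}. -/

import Mathlib

noncomputable def d (Fp Fm x : ℝ) : ℝ := Fp * max x 0 - Fm * min x 0

noncomputable def D (Fp Fm : ℝ) (w : ℝ × ℝ) (v : ℝ) : ℝ :=
  d Fp Fm (v - w.1) + d Fp Fm v + d Fp Fm (v + w.2)

/-! `D w` is piecewise linear with kinks at `w₁`, `0`, `-w₂`. Moving right from the largest kink `m`
all three terms grow with slope `F₊ > 0`; moving left the term whose kink is `m` grows with slope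
`F₋` while the other two fall with slope at most `F₊` each, a net gain since `F₋ > 2F₊`. -/

section

variable {Fp Fm : ℝ}

theorem d_of_nonneg {x : ℝ} (hx : 0 ≤ x) : d Fp Fm x = Fp * x := by
  rw [d, max_eq_left hx, min_eq_right hx, mul_zero, sub_zero]

theorem d_of_nonpos {x : ℝ} (hx : x ≤ 0) : d Fp Fm x = -(Fm * x) := by
  rw [d, max_eq_right hx, min_eq_left hx, mul_zero, zero_sub]

theorem mul_le_d (h : 0 ≤ Fp + Fm) (x : ℝ) : Fp * x ≤ d Fp Fm x := by
  rcases le_total x 0 with hx | hx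
  · rw [d_of_nonpos hx]; nlinarith
  · rw [d_of_nonneg hx]

theorem d_add_sum_lt_of_pos (hp : 0 < Fp) {a b c t : ℝ} (ha : 0 ≤ a) (hb : 0 ≤ b) (hc : 0 ≤ c)
    (ht : 0 < t) :
    d Fp Fm a + d Fp Fm b + d Fp Fm c < d Fp Fm (a + t) + d Fp Fm (b + t) + d Fp Fm (c + t) := by
  simp only [d_of_nonneg, ha, hb, hc, add_nonneg, ht.le]
  nlinarith

theorem d_zero_add_sum_lt_of_neg (hp : 0 ≤ Fp) (hm : 2 * Fp < Fm) {b c t : ℝ} (hb : 0 ≤ b)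
    (hc : 0 ≤ c) (ht : t < 0) :
    d Fp Fm 0 + d Fp Fm b + d Fp Fm c < d Fp Fm t + d Fp Fm (b + t) + d Fp Fm (c + t) := by
  have hsum : 0 ≤ Fp + Fm := by linarith
  rw [d_of_nonneg le_rfl, d_of_nonneg hb, d_of_nonneg hc, d_of_nonpos ht.le]
  nlinarith [mul_le_d hsum (b + t), mul_le_d hsum (c + t)]

theorem d_add_sum_lt (hp : 0 < Fp) (hm : 2 * Fp < Fm) {a b c t : ℝ} (ha : 0 ≤ a) (hb : 0 ≤ b)
    (hc : 0 ≤ c) (habc : a = 0 ∨ b = 0 ∨ c = 0) (ht : t ≠ 0) :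
    d Fp Fm a + d Fp Fm b + d Fp Fm c < d Fp Fm (a + t) + d Fp Fm (b + t) + d Fp Fm (c + t) := by
  rcases ht.lt_or_gt with ht | ht
  · rcases habc with rfl | rfl | rfl
    · simpa using d_zero_add_sum_lt_of_neg hp.le hm hb hc ht
    · rw [zero_add]; linarith [d_zero_add_sum_lt_of_neg hp.le hm ha hc ht]
    · rw [zero_add]; linarith [d_zero_add_sum_lt_of_neg hp.le hm ha hb ht]
  · exact d_add_sum_lt_of_pos hp ha hb hc ht

theorem D_max_lt (hp : 0 < Fp) (hm : 2 * Fp < Fm) (w : ℝ × ℝ) {u : ℝ}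
    (hu : u ≠ max w.1 (max 0 (-w.2))) :
    D Fp Fm w (max w.1 (max 0 (-w.2))) < D Fp Fm w u := by
  have hkink : max w.1 (max 0 (-w.2)) - w.1 = 0 ∨ max w.1 (max 0 (-w.2)) = 0 ∨
      max w.1 (max 0 (-w.2)) + w.2 = 0 := by
    rcases max_choice w.1 (max 0 (-w.2)) with h | h
    · exact .inl (by rw [h, sub_self])
    · rcases max_choice 0 (-w.2) with h' | h'
      · exact .inr (.inl (h.trans h'))
      · exact .inr (.inr (by rw [h, h', neg_add_cancel]))
  set m := max w.1 (max 0 (-w.2))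
  have h1 : w.1 ≤ m := le_max_left _ _
  have h2 : 0 ≤ m := (le_max_left _ _).trans (le_max_right _ _)
  have h3 : -w.2 ≤ m := (le_max_right _ _).trans (le_max_right _ _)
  have hD : ∀ t, D Fp Fm w (m + t) =
      d Fp Fm (m - w.1 + t) + d Fp Fm (m + t) + d Fp Fm (m + w.2 + t) := fun t => by
    rw [D, sub_add_eq_add_sub, add_right_comm m w.2 t]
  rw [← add_sub_cancel m u, hD]
  exact d_add_sum_lt hp hm (sub_nonneg.2 h1) h2 (by linarith) hkink (sub_ne_zero.2 hu)

end

theorem vmin_is_max (Fp Fm : ℝ) (hp : 0 < Fp) (hm : 2 * Fp < Fm) (w : ℝ × ℝ) :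
    (∀ u : ℝ, D Fp Fm w (max w.1 (max 0 (-w.2))) ≤ D Fp Fm w u) ∧
    (∀ v : ℝ, (∀ u : ℝ, D Fp Fm w v ≤ D Fp Fm w u) →
      v = max w.1 (max 0 (-w.2))) := by
  refine ⟨fun u => ?_, fun v hv => ?_⟩
  · rcases eq_or_ne u (max w.1 (max 0 (-w.2))) with rfl | hu
    · exact le_rfl
    · exact (D_max_lt hp hm w hu).le
  · by_contra hv'
    exact (D_max_lt hp hm w hv').not_ge (hv _)
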